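/- arXiv:0706.0138 — 4 statements merged into one kernel-verified Lean document; each statement's English description precedes it below -/
import Mathlib

section
/- If an irrational real number x and a rational n/m (m ≥ 1) satisfy |m x − n| < 1/(2m), then n/m is one of the convergents of the continued fraction expansion of x. -/
/-- The Gauss-map iterates for the continued fraction expansion of `α`. -/
noncomputable def cfXi (α : ℝ) : ℕ → ℝ
  | 0 => Int.fract α
  | k + 1 => Int.fract (cfXi α k)⁻¹

/-- The partial quotients of the continued fraction expansion of `α`. -/
noncomputable def cfA (α : ℝ) : ℕ → ℤ
  | 0 => ⌊α⌋
  | k + 1 => ⌊(cfXi α k)⁻¹⌋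

/-- Denominators `m_k` of the convergents: `m_0 = 1`, `m_1 = a_1`,
`m_{k+2} = a_{k+2} m_{k+1} + m_k`. -/
noncomputable def cfM (α : ℝ) : ℕ → ℤ
  | 0 => 1
  | 1 => cfA α 1
  | k + 2 => cfA α (k + 2) * cfM α (k + 1) + cfM α k

/-- Numerators `n_k` of the convergents: `n_0 = a_0`, `n_1 = a_1 a_0 + 1`,
`n_{k+2} = a_{k+2} n_{k+1} + n_k`. -/
noncomputable def cfN (α : ℝ) : ℕ → ℤ
  | 0 => cfA α 0
  | 1 => cfA α 1 * cfA α 0 + 1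
  | k + 2 => cfA α (k + 2) * cfN α (k + 1) + cfN α k

/-!
Legendre's theorem is in Mathlib as `Real.exists_rat_eq_convergent`, for the convergents
`Real.convergent`, defined by `convergent x (k + 1) = ⌊x⌋ + (convergent (fract x)⁻¹ k)⁻¹`.
The partial quotients of `(fract x)⁻¹` are those of `x` shifted by one, so `cfN` and `cfM` obey
the same recursion and `convergent x k = cfN x k / cfM x k`; for irrational `x` every `cfM x k`
is at least `1`, so no junk division by zero occurs. Passing to lowest terms only shrinks the
denominator of `n / m`, so the hypothesis gives Legendre's condition `|x - q| < 1 / (2 q.den ^ 2)`.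
-/

lemma irrational_cfXi {x : ℝ} (hx : Irrational x) : ∀ k, Irrational (cfXi x k)
  | 0 => hx.sub_intCast _
  | k + 1 => (irrational_cfXi hx k).inv.sub_intCast _

lemma cfXi_pos {x : ℝ} (hx : Irrational x) : ∀ k, 0 < cfXi x k
  | 0 => Int.fract_pos.mpr (hx.ne_int ⌊x⌋)
  | k + 1 => Int.fract_pos.mpr ((irrational_cfXi hx k).inv.ne_int _)

lemma cfXi_lt_one (x : ℝ) : ∀ k, cfXi x k < 1
  | 0 => Int.fract_lt_one _
  | _ + 1 => Int.fract_lt_one _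

lemma one_le_cfA_succ {x : ℝ} (hx : Irrational x) (k : ℕ) : 1 ≤ cfA x (k + 1) := by
  have hξ : 1 ≤ (cfXi x k)⁻¹ := (one_le_inv₀ (cfXi_pos hx k)).mpr (cfXi_lt_one x k).le
  exact Int.le_floor.mpr (mod_cast hξ)

lemma one_le_cfM {x : ℝ} (hx : Irrational x) : ∀ k, 1 ≤ cfM x k
  | 0 => le_rfl
  | 1 => one_le_cfA_succ hx 0
  | k + 2 => by
    have := one_le_cfA_succ hx (k + 1)
    have := one_le_cfM hx k
    have := one_le_cfM hx (k + 1)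
    simp only [cfM]
    nlinarith

lemma cfXi_fract_inv (x : ℝ) : ∀ k, cfXi (Int.fract x)⁻¹ k = cfXi x (k + 1)
  | 0 => rfl
  | k + 1 => by simp only [cfXi, cfXi_fract_inv x k]

lemma cfA_fract_inv (x : ℝ) : ∀ k, cfA (Int.fract x)⁻¹ k = cfA x (k + 1)
  | 0 => rfl
  | k + 1 => by simp only [cfA, cfXi_fract_inv]

lemma cfM_succ (x : ℝ) : ∀ k, cfM x (k + 1) = cfN (Int.fract x)⁻¹ k
  | 0 => by simp only [cfM, cfN, cfA_fract_inv]
  | 1 => by simp only [cfM, cfN, cfA_fract_inv]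
  | k + 2 => by simp only [cfM, cfN, cfA_fract_inv, ← cfM_succ x k, ← cfM_succ x (k + 1)]

lemma cfN_succ (x : ℝ) :
    ∀ k, cfN x (k + 1) = cfA x 0 * cfN (Int.fract x)⁻¹ k + cfM (Int.fract x)⁻¹ k
  | 0 => by simp only [cfM, cfN, cfA_fract_inv]; ring
  | 1 => by simp only [cfM, cfN, cfA_fract_inv]; ring
  | k + 2 => by
    rw [cfN, cfN_succ x k, cfN_succ x (k + 1), cfN, cfM, cfA_fract_inv]
    ring

theorem Real.convergent_eq_cfN_div_cfM {x : ℝ} (hx : Irrational x) (k : ℕ) :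
    (x.convergent k : ℝ) = cfN x k / cfM x k := by
  induction k generalizing x with
  | zero => simp [cfN, cfM, cfA]
  | succ k ih =>
    have hN : (cfN (Int.fract x)⁻¹ k : ℝ) ≠ 0 := by
      rw [← cfM_succ]
      exact_mod_cast (zero_lt_one.trans_le (one_le_cfM hx (k + 1))).ne'
    rw [Real.convergent_succ, Rat.cast_add, Rat.cast_intCast, Rat.cast_inv,
      ih (x := (Int.fract x)⁻¹) (irrational_cfXi hx 0).inv, cfN_succ, cfM_succ, inv_div,
      cfA, Int.cast_add, Int.cast_mul, add_div, mul_div_cancel_right₀ _ hN]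

lemma Rat.den_intCast_div_natCast_dvd (n : ℤ) (m : ℕ) : ((n : ℚ) / m).den ∣ m := by
  have := Rat.den_dvd n m
  rw [Rat.divInt_eq_div] at this
  exact_mod_cast this

lemma abs_sub_lt_one_div_two_den_sq {x : ℝ} {n : ℤ} {m : ℕ}
    (h : |m * x - n| < 1 / (2 * m)) :
    |x - ((n / m : ℚ) : ℝ)| < 1 / (2 * ((n / m : ℚ).den : ℝ) ^ 2) := by
  have hm : (0 : ℝ) < m := by simpa using (abs_nonneg _).trans_lt h
  have hden : ((n / m : ℚ).den : ℝ) ≤ m :=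
    Nat.cast_le.mpr <| Nat.le_of_dvd (Nat.cast_pos.mp hm) (Rat.den_intCast_div_natCast_dvd n m)
  calc |x - ((n / m : ℚ) : ℝ)| = |m * x - n| / m := by
        push_cast
        rw [← abs_of_pos hm, ← abs_div, abs_of_pos hm, sub_div, mul_div_cancel_left₀ x hm.ne']
    _ < 1 / (2 * m) / m := by gcongr
    _ = 1 / (2 * (m : ℝ) ^ 2) := by ring
    _ ≤ 1 / (2 * ((n / m : ℚ).den : ℝ) ^ 2) := by gcongr

theorem good_approx_is_convergent_general (x : ℝ) (hx : Irrational x) (n : ℤ) (m : ℕ)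
    (h : |(m : ℝ) * x - (n : ℝ)| < 1 / (2 * (m : ℝ))) :
    ∃ k : ℕ, (n : ℝ) / (m : ℝ) = (cfN x k : ℝ) / (cfM x k : ℝ) := by
  obtain ⟨k, hk⟩ := Real.exists_rat_eq_convergent (abs_sub_lt_one_div_two_den_sq h)
  refine ⟨k, ?_⟩
  rw [← Real.convergent_eq_cfN_div_cfM hx k, ← hk, Rat.cast_div, Rat.cast_intCast, Rat.cast_natCast]

/-- If an irrational real `x` and a rational `n/m` (`m ≥ 1`) satisfy `|m x − n| < 1/(2m)`,
then `n/m` is one of the convergents of the continued fraction expansion of `x`. -/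
theorem good_approx_is_convergent (x : ℝ) (hx : Irrational x) (n : ℤ) (m : ℕ) (hm : 1 ≤ m)
    (h : |(m : ℝ) * x - (n : ℝ)| < 1 / (2 * (m : ℝ))) :
    ∃ k : ℕ, (n : ℝ) / (m : ℝ) = (cfN x k : ℝ) / (cfM x k : ℝ) :=
  good_approx_is_convergent_general x hx n m h
end

section
/- Let A ⊂ ℝ be closed and invariant under integer translations, with complement ℝ \ A a union of open intervals (α_ℓ, α'_ℓ). Then the connected components of ℂ \ A^ℂ are exactly the open diamonds Δ_ℓ = { x + iy : x ∈ (α_ℓ, α'_ℓ), |y| < min(x − α_ℓ, α'_ℓ − x) }. -/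
open Metric Set


/-- If `A ⊆ ℝ` is closed, invariant under integer translations, and
`ℝ \ A = ⋃ (α_ℓ, α'_ℓ)` is a disjoint union of open intervals, then the connected components
of `ℂ \ A^ℂ` are exactly the open diamonds
`Δ_ℓ = { x+iy : x ∈ (α_ℓ, α'_ℓ), |y| < min (x − α_ℓ) (α'_ℓ − x) }`. -/
theorem components_of_complement_are_diamonds {ι : Type*} (A : Set ℝ) (hA : IsClosed A)
    (hinv : ∀ x : ℝ, x ∈ A ↔ x + 1 ∈ A)
    (a b : ι → ℝ) (hab : ∀ ℓ, a ℓ < b ℓ)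
    (hcover : Aᶜ = ⋃ ℓ, Set.Ioo (a ℓ) (b ℓ))
    (hdisj : Pairwise (Function.onFun Disjoint (fun ℓ => Set.Ioo (a ℓ) (b ℓ)))) :
    {S : Set ℂ | ∃ z ∈ {z : ℂ | |z.im| < Metric.infDist z.re A},
        S = connectedComponentIn {z : ℂ | |z.im| < Metric.infDist z.re A} z} =
      {S : Set ℂ | ∃ ℓ : ι,
        S = {z : ℂ | z.re ∈ Set.Ioo (a ℓ) (b ℓ) ∧ |z.im| < min (z.re - a ℓ) (b ℓ - z.re)}} := by
  set U : Set ℂ := {z : ℂ | |z.im| < Metric.infDist z.re A} with hUdef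
  set D : ι → Set ℂ := fun ℓ =>
    {z : ℂ | z.re ∈ Set.Ioo (a ℓ) (b ℓ) ∧ |z.im| < min (z.re - a ℓ) (b ℓ - z.re)} with hDdef
  -- intervals are in the complement
  have hsub : ∀ ℓ, Set.Ioo (a ℓ) (b ℓ) ⊆ Aᶜ := by
    intro ℓ x hx
    rw [hcover]
    exact Set.mem_iUnion.2 ⟨ℓ, hx⟩
  -- overlapping intervals coincide
  have key : ∀ ℓ m, max (a ℓ) (a m) < min (b ℓ) (b m) → ℓ = m := by
    intro ℓ m h
    by_contra hne
    set c := (max (a ℓ) (a m) + min (b ℓ) (b m)) / 2 with hc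
    have h1 : max (a ℓ) (a m) < c := by rw [hc]; linarith
    have h2 : c < min (b ℓ) (b m) := by rw [hc]; linarith
    exact Set.disjoint_left.1 (hdisj hne)
      ⟨lt_of_le_of_lt (le_max_left _ _) h1, h2.trans_le (min_le_left _ _)⟩
      ⟨lt_of_le_of_lt (le_max_right _ _) h1, h2.trans_le (min_le_right _ _)⟩
  -- endpoints belong to A
  have haA : ∀ ℓ, a ℓ ∈ A := by
    intro ℓ
    by_contra ha
    rw [← Set.mem_compl_iff, hcover, Set.mem_iUnion] at ha
    obtain ⟨m, hm⟩ := ha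
    have : ℓ = m := key ℓ m (lt_of_le_of_lt (max_le le_rfl hm.1.le) (lt_min (hab ℓ) (hm.2)))
    rw [← this] at hm
    exact lt_irrefl (a ℓ) hm.1
  have hbA : ∀ ℓ, b ℓ ∈ A := by
    intro ℓ
    by_contra hb
    rw [← Set.mem_compl_iff, hcover, Set.mem_iUnion] at hb
    obtain ⟨m, hm⟩ := hb
    have : ℓ = m := key ℓ m (lt_of_lt_of_le (max_lt (hab ℓ) hm.1) (le_min le_rfl hm.2.le))
    rw [← this] at hm
    exact lt_irrefl (b ℓ) hm.2
  -- the infimum distance formula inside an interval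
  have hinf : ∀ ℓ, ∀ x, x ∈ Set.Ioo (a ℓ) (b ℓ) →
      Metric.infDist x A = min (x - a ℓ) (b ℓ - x) := by
    intro ℓ x hx
    apply le_antisymm
    · apply le_min
      · calc Metric.infDist x A ≤ dist x (a ℓ) := Metric.infDist_le_dist_of_mem (haA ℓ)
          _ = x - a ℓ := by rw [Real.dist_eq, abs_of_pos (by linarith [hx.1])]
      · calc Metric.infDist x A ≤ dist x (b ℓ) := Metric.infDist_le_dist_of_mem (hbA ℓ)
          _ = b ℓ - x := by
              rw [Real.dist_eq, abs_of_neg (by linarith [hx.2])]; ring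
    · by_contra h
      push_neg at h
      obtain ⟨y, hy, hdy⟩ := (Metric.infDist_lt_iff ⟨a ℓ, haA ℓ⟩).1 h
      have hyn : y ∉ Set.Ioo (a ℓ) (b ℓ) := fun hy' => (hsub ℓ hy') hy
      rw [Real.dist_eq, abs_lt] at hdy
      rw [Set.mem_Ioo, not_and_or, not_lt, not_lt] at hyn
      have hm1 := min_le_left (x - a ℓ) (b ℓ - x)
      have hm2 := min_le_right (x - a ℓ) (b ℓ - x)
      rcases hyn with h1 | h1
      · linarith [hdy.2]
      · linarith [hdy.1]
  -- membership in U is membership in some diamond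
  have hUD : ∀ z : ℂ, z ∈ U ↔ ∃ ℓ, z ∈ D ℓ := by
    intro z
    constructor
    · intro hz
      have hzU : |z.im| < Metric.infDist z.re A := hz
      have hre : z.re ∉ A := by
        intro h
        rw [Metric.infDist_zero_of_mem h] at hzU
        exact absurd hzU (not_lt.2 (abs_nonneg _))
      rw [← Set.mem_compl_iff, hcover, Set.mem_iUnion] at hre
      obtain ⟨ℓ, hℓ⟩ := hre
      exact ⟨ℓ, hℓ, by rwa [hinf ℓ z.re hℓ] at hzU⟩
    · rintro ⟨ℓ, hℓ, him⟩
      show |z.im| < Metric.infDist z.re A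
      rwa [hinf ℓ z.re hℓ]
  -- diamonds as intersections of halfspaces
  have hDeq : ∀ ℓ, D ℓ = ({z : ℂ | z.im - z.re < -a ℓ} ∩ {z : ℂ | -z.im - z.re < -a ℓ}) ∩
      ({z : ℂ | z.im + z.re < b ℓ} ∩ {z : ℂ | -z.im + z.re < b ℓ}) := by
    intro ℓ
    ext z
    simp only [hDdef, Set.mem_setOf_eq, Set.mem_Ioo, Set.mem_inter_iff, lt_min_iff, abs_lt]
    constructor
    · rintro ⟨⟨h1, h2⟩, ⟨h3, h4⟩, h5, h6⟩
      exact ⟨⟨by linarith, by linarith⟩, by linarith, by linarith⟩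
    · rintro ⟨⟨h1, h2⟩, h3, h4⟩
      refine ⟨⟨by linarith, by linarith⟩, ⟨⟨by linarith, by linarith⟩, by linarith, by linarith⟩⟩
  have lin1 : IsLinearMap ℝ (fun z : ℂ => z.im - z.re) :=
    ⟨fun x y => by simp [Complex.add_im, Complex.add_re]; ring,
     fun c x => by simp [Complex.smul_im, Complex.smul_re, smul_eq_mul]; ring⟩
  have lin2 : IsLinearMap ℝ (fun z : ℂ => -z.im - z.re) :=
    ⟨fun x y => by simp [Complex.add_im, Complex.add_re]; ring,
     fun c x => by simp [Complex.smul_im, Complex.smul_re, smul_eq_mul]; ring⟩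
  have lin3 : IsLinearMap ℝ (fun z : ℂ => z.im + z.re) :=
    ⟨fun x y => by simp [Complex.add_im, Complex.add_re]; ring,
     fun c x => by simp [Complex.smul_im, Complex.smul_re, smul_eq_mul]; ring⟩
  have lin4 : IsLinearMap ℝ (fun z : ℂ => -z.im + z.re) :=
    ⟨fun x y => by simp [Complex.add_im, Complex.add_re]; ring,
     fun c x => by simp [Complex.smul_im, Complex.smul_re, smul_eq_mul]; ring⟩
  have hDconv : ∀ ℓ, Convex ℝ (D ℓ) := by
    intro ℓ
    rw [hDeq ℓ]
    exact (((convex_halfSpace_lt lin1 _).inter (convex_halfSpace_lt lin2 _)).inter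
      ((convex_halfSpace_lt lin3 _).inter (convex_halfSpace_lt lin4 _)))
  have hDopen : ∀ ℓ, IsOpen (D ℓ) := by
    intro ℓ
    rw [hDeq ℓ]
    refine IsOpen.inter (IsOpen.inter ?_ ?_) (IsOpen.inter ?_ ?_)
    · exact isOpen_lt (Complex.continuous_im.sub Complex.continuous_re) continuous_const
    · exact isOpen_lt (Complex.continuous_im.neg.sub Complex.continuous_re) continuous_const
    · exact isOpen_lt (Complex.continuous_im.add Complex.continuous_re) continuous_const
    · exact isOpen_lt (Complex.continuous_im.neg.add Complex.continuous_re) continuous_const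
  -- midpoint of each interval gives a point in the diamond
  have hmid : ∀ ℓ, (((a ℓ + b ℓ) / 2 : ℝ) : ℂ) ∈ D ℓ := by
    intro ℓ
    have h := hab ℓ
    refine ⟨⟨?_, ?_⟩, ?_⟩
    · simp only [Complex.ofReal_re]; linarith
    · simp only [Complex.ofReal_re]; linarith
    · simp only [Complex.ofReal_re, Complex.ofReal_im, abs_zero, lt_min_iff]
      constructor <;> linarith
  -- diamonds are pairwise disjoint
  have hDdisj : ∀ ℓ m, ℓ ≠ m → ∀ z : ℂ, z ∈ D ℓ → z ∈ D m → False := by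
    intro ℓ m h z h1 h2
    exact h (key ℓ m ((max_lt h1.1.1 h2.1.1).trans (lt_min h1.1.2 h2.1.2)))
  -- each diamond is the connected component of its points
  have hcomp : ∀ ℓ, ∀ z ∈ D ℓ, connectedComponentIn U z = D ℓ := by
    intro ℓ z hz
    have hzU : z ∈ U := (hUD z).2 ⟨ℓ, hz⟩
    apply Set.Subset.antisymm
    · apply IsPreconnected.subset_left_of_subset_union (hDopen ℓ)
        (isOpen_biUnion fun m (_ : m ∈ {m : ι | m ≠ ℓ}) => hDopen m)
      · rw [Set.disjoint_left]
        intro w hw hw'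
        obtain ⟨m, hm, hwm⟩ := Set.mem_iUnion₂.1 hw'
        exact hDdisj m ℓ hm w hwm hw
      · intro w hw
        obtain ⟨m, hwm⟩ := (hUD w).1 (connectedComponentIn_subset U z hw)
        by_cases h : m = ℓ
        · left; rwa [h] at hwm
        · right; exact Set.mem_biUnion h hwm
      · exact ⟨z, mem_connectedComponentIn hzU, hz⟩
      · exact isPreconnected_connectedComponentIn
    · exact ((hDconv ℓ).isPreconnected).subset_connectedComponentIn hz
        (fun w hw => (hUD w).2 ⟨ℓ, hw⟩)
  ext S
  simp only [Set.mem_setOf_eq]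
  constructor
  · rintro ⟨z, hz, rfl⟩
    obtain ⟨ℓ, hℓ⟩ := (hUD z).1 hz
    exact ⟨ℓ, hcomp ℓ z hℓ⟩
  · rintro ⟨ℓ, rfl⟩
    exact ⟨(((a ℓ + b ℓ) / 2 : ℝ) : ℂ), (hUD _).2 ⟨ℓ, hmid ℓ⟩, (hcomp ℓ _ (hmid ℓ)).symm⟩
end

section
/- Let B be the Banach space of 1-periodic functions continuous on the closed strip |Im θ| ≤ R/2 and holomorphic in its interior, with the sup norm. Then the projection Π⁺ sending v = Σ_{k∈ℤ} v_k e^{2πikθ} to Σ_{k≥1} v_k e^{2πikθ} is a bounded linear operator on B with operator norm at most 2 + 1/(e^{2πR} − 1). -/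
/-!
Write `v = Π⁺v + v₀ + Π⁻v` on the open strip `|Im θ| < a` (`a = R/2`). Moving the line of
integration to `Im = ∓a` gives `|v_k| ≤ C e^{-2πa|k|}`, so `Π⁺v` converges for `Im θ > -a` with
`|Π⁺v(θ)| ≤ C / (e^{2π(Im θ + a)} - 1)`, and symmetrically `Π⁻v` is holomorphic for `Im θ < a`
with `|Π⁻v(θ)| ≤ C / (e^{2π(a - Im θ)} - 1)`. Hence `G = v - v₀ - Π⁻v`, which equals `Π⁺v`
inside the strip, is bounded on `-a ≤ Im θ ≤ b` for every `b < a`, by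
`2C + C / (e^{4πa} - 1)` on the bottom line and by `C / (e^{2π(b + a)} - 1)` on the top one; the
latter is below the former when `b` is close to `a`, and Phragmén–Lindelöf bounds `Π⁺v` in between.
On `Im θ = a` the bound for `Π⁺v` is direct, and on `Im θ = -a` it follows from Abel's theorem.
-/

open Complex Real Filter Topology Set

theorem hasSum_exp_neg_mul_succ {x : ℝ} (hx : 0 < x) :
    HasSum (fun k : ℕ => rexp (-(x * (k + 1)))) (1 / (rexp x - 1)) := by
  have hr : rexp (-x) < 1 := Real.exp_lt_one_iff.2 (by linarith)
  have hterm : (fun k : ℕ => rexp (-(x * (k + 1)))) = fun k : ℕ => rexp (-x) * rexp (-x) ^ k := by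
    funext k
    rw [← Real.exp_nat_mul, ← Real.exp_add]
    ring_nf
  have hsum : rexp (-x) * (1 - rexp (-x))⁻¹ = 1 / (rexp x - 1) := by
    have : rexp x - 1 ≠ 0 := (sub_pos.2 (Real.one_lt_exp_iff.2 hx)).ne'
    rw [Real.exp_neg]
    field_simp
  rw [hterm, ← hsum]
  exact (hasSum_geometric_of_lt_one (Real.exp_nonneg _) hr).mul_left _

section GeometricDecay

variable {f : ℕ → ℂ} {C x : ℝ}

theorem summable_of_norm_le_exp_neg_mul_succ (hx : 0 < x)
    (hf : ∀ k : ℕ, ‖f k‖ ≤ C * rexp (-(x * (k + 1)))) : Summable f :=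
  Summable.of_norm_bounded ((hasSum_exp_neg_mul_succ hx).mul_left C).summable hf

theorem norm_tsum_le_of_norm_le_exp_neg_mul_succ (hx : 0 < x)
    (hf : ∀ k : ℕ, ‖f k‖ ≤ C * rexp (-(x * (k + 1)))) : ‖∑' k, f k‖ ≤ C / (rexp x - 1) :=
  (tsum_of_norm_bounded ((hasSum_exp_neg_mul_succ hx).mul_left C) hf).trans_eq (mul_one_div _ _)

end GeometricDecay

theorem hasSum_mul_cexp_of_periodic {w : ℝ → ℂ} {b : ℤ → ℂ} (hw : Continuous w)
    (hper : Function.Periodic w 1)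
    (hb : ∀ m : ℤ, ∫ t in (0 : ℝ)..1, w t * cexp (-(2 * π * I * m * t)) = b m)
    (hs : Summable b) (t : ℝ) : HasSum (fun m : ℤ => b m * cexp (2 * π * I * m * t)) (w t) := by
  have : Fact ((0 : ℝ) < 1) := ⟨one_pos⟩
  let f : C(AddCircle (1 : ℝ), ℂ) := ⟨hper.lift, hw.quotient_liftOn' _⟩
  have hcoeff : fourierCoeff f = b := by
    funext m
    rw [fourierCoeff_eq_intervalIntegral f m 0, ← hb m]
    simp only [div_one, one_smul, zero_add]
    refine intervalIntegral.integral_congr fun s _ => ?_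
    simp only [fourier_coe_apply, smul_eq_mul]
    change _ * w s = w s * _
    rw [mul_comm]
    push_cast
    ring_nf
  have h := has_pointwise_sum_fourier_series_of_summable (hcoeff ▸ hs) (t : AddCircle (1 : ℝ))
  simp only [hcoeff, fourier_coe_apply, ofReal_one, div_one, smul_eq_mul] at h
  exact h

theorem norm_tsum_le_of_abel {α : Type*} {l : Filter α} [l.NeBot] {r : α → ℝ}
    (hr : Tendsto r l (𝓝[<] 1)) {f : ℕ → ℂ} (hf : Summable f) {M : ℝ}
    (hM : ∀ᶠ x in l, ‖∑' n, f n * (r x : ℂ) ^ (n + 1)‖ ≤ M) : ‖∑' n, f n‖ ≤ M := by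
  have habel : Tendsto (fun x => ∑' n, f n * (r x : ℂ) ^ n) l (𝓝 (∑' n, f n)) :=
    (Complex.tendsto_tsum_powerSeries_nhdsWithin_lt hf.hasSum.tendsto_sum_nat).comp
      (tendsto_map.comp hr)
  have hone : Tendsto (fun x => (r x : ℂ)) l (𝓝 1) := by
    simpa [Function.comp_def] using
      (continuous_ofReal.tendsto 1).comp (hr.mono_right nhdsWithin_le_nhds)
  have hlim := (hone.mul habel).norm
  rw [one_mul] at hlim
  refine le_of_tendsto hlim (hM.mono fun x hx => ?_)
  have hshift : ∀ n, (r x : ℂ) * (f n * (r x : ℂ) ^ n) = f n * (r x : ℂ) ^ (n + 1) :=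
    fun n => by ring
  rwa [← tsum_mul_left, tsum_congr hshift]

theorem norm_le_of_bounded_of_horizontal_strip {f : ℂ → ℂ} {a b B M : ℝ} {z : ℂ} (hab : a < b)
    (hfd : DiffContOnCl ℂ f (im ⁻¹' Ioo a b)) (hB : ∀ w ∈ im ⁻¹' Ioo a b, ‖f w‖ ≤ B)
    (hle_a : ∀ w : ℂ, w.im = a → ‖f w‖ ≤ M) (hle_b : ∀ w : ℂ, w.im = b → ‖f w‖ ≤ M)
    (hza : a ≤ z.im) (hzb : z.im ≤ b) : ‖f z‖ ≤ M := by
  refine PhragmenLindelof.horizontal_strip hfd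
    ⟨0, div_pos pi_pos (sub_pos.2 hab), 0, ?_⟩ hle_a hle_b hza hzb
  refine Asymptotics.IsBigO.of_bound B ?_
  rw [eventually_inf_principal]
  exact Eventually.of_forall fun w hw => by simpa using hB w hw

theorem norm_integral_line_le {v : ℂ → ℂ} {C ρ : ℝ} (m : ℤ)
    (hv : ∀ t : ℝ, ‖v (t + ρ * I)‖ ≤ C) :
    ‖∫ t in (0 : ℝ)..1, v (t + ρ * I) * cexp (-(2 * π * I * m) * (t + ρ * I))‖ ≤
      C * rexp (2 * π * m * ρ) := by
  have hbound : ∀ t ∈ uIoc (0 : ℝ) 1,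
      ‖v (t + ρ * I) * cexp (-(2 * π * I * m) * (t + ρ * I))‖ ≤ C * rexp (2 * π * m * ρ) := by
    intro t _
    rw [norm_mul, Complex.norm_exp]
    gcongr
    · exact (norm_nonneg _).trans (hv t)
    · exact hv t
    · simp [Complex.mul_re, Complex.mul_im]
  simpa using intervalIntegral.norm_integral_le_of_norm_le_const hbound

namespace StripFourier

noncomputable def fourierTerm (c : ℤ → ℂ) (m : ℤ) (z : ℂ) : ℂ := c m * cexp (2 * π * I * m * z)

-- With `c = (v_k)`, these are `Π⁺v` and `Π⁻v` in `v = Π⁺v + v₀ + Π⁻v`.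
noncomputable def posPart (c : ℤ → ℂ) (z : ℂ) : ℂ := ∑' k : ℕ, fourierTerm c (k + 1) z

noncomputable def negPart (c : ℤ → ℂ) (z : ℂ) : ℂ := ∑' k : ℕ, fourierTerm c (-(k + 1)) z

theorem norm_fourierTerm (c : ℤ → ℂ) (m : ℤ) (z : ℂ) :
    ‖fourierTerm c m z‖ = ‖c m‖ * rexp (-(2 * π * m * z.im)) := by
  simp [fourierTerm, Complex.norm_exp, Complex.mul_re, Complex.mul_im]

theorem fourierTerm_add (c : ℤ → ℂ) (m : ℤ) (z w : ℂ) :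
    fourierTerm c m (z + w) = fourierTerm c m z * cexp (2 * π * I * m * w) := by
  simp only [fourierTerm, mul_assoc, ← Complex.exp_add]
  ring_nf

@[simp]
theorem fourierTerm_zero (c : ℤ → ℂ) (z : ℂ) : fourierTerm c 0 z = c 0 := by
  simp [fourierTerm]

theorem differentiable_fourierTerm (c : ℤ → ℂ) (m : ℤ) : Differentiable ℂ (fourierTerm c m) := by
  unfold fourierTerm
  fun_prop

def HasExpDecay (c : ℤ → ℂ) (a C : ℝ) : Prop :=
  ∀ m : ℤ, ‖c m‖ ≤ C * rexp (-(2 * π * a * |(m : ℝ)|))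

def HasFourierCoeffOnLines (v : ℂ → ℂ) (vk : ℤ → ℂ) (a : ℝ) : Prop :=
  ∀ (k : ℤ) (ρ : ℝ), |ρ| ≤ a →
    vk k = ∫ t in (0 : ℝ)..1,
      v ((t : ℂ) + (ρ : ℂ) * I) * cexp (-(2 * (π : ℂ) * I * (k : ℂ)) * ((t : ℂ) + (ρ : ℂ) * I))

section Coefficients

variable {c : ℤ → ℂ} {a C : ℝ}

theorem HasExpDecay.nonneg (hc : HasExpDecay c a C) : 0 ≤ C := by
  simpa using (norm_nonneg _).trans (hc 0)

theorem norm_fourierTerm_le (hc : HasExpDecay c a C) (m : ℤ) (z : ℂ) :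
    ‖fourierTerm c m z‖ ≤ C * rexp (-(2 * π * (a * |(m : ℝ)| + m * z.im))) := by
  rw [norm_fourierTerm]
  calc ‖c m‖ * rexp (-(2 * π * m * z.im))
      ≤ C * rexp (-(2 * π * a * |(m : ℝ)|)) * rexp (-(2 * π * m * z.im)) := by gcongr; exact hc m
    _ = C * rexp (-(2 * π * (a * |(m : ℝ)| + m * z.im))) := by
      rw [mul_assoc, ← Real.exp_add]; ring_nf

theorem norm_fourierTerm_succ_le (hc : HasExpDecay c a C) (k : ℕ) (z : ℂ) :
    ‖fourierTerm c (k + 1) z‖ ≤ C * rexp (-(2 * π * (z.im + a) * (k + 1))) := by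
  refine (norm_fourierTerm_le hc _ z).trans_eq ?_
  rw [show |((k + 1 : ℤ) : ℝ)| = k + 1 by push_cast; exact abs_of_pos (by positivity)]
  push_cast; ring_nf

theorem summable_fourierTerm_succ (hc : HasExpDecay c a C) {z : ℂ} (hz : -a < z.im) : Summable fun k : ℕ => fourierTerm c (k + 1) z :=
  summable_of_norm_le_exp_neg_mul_succ (by nlinarith [pi_pos]) (norm_fourierTerm_succ_le hc · z)

theorem norm_posPart_le (hc : HasExpDecay c a C) {z : ℂ} (hz : -a < z.im) : ‖posPart c z‖ ≤ C / (rexp (2 * π * (z.im + a)) - 1) :=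
  norm_tsum_le_of_norm_le_exp_neg_mul_succ (by nlinarith [pi_pos]) (norm_fourierTerm_succ_le hc · z)

theorem norm_fourierTerm_neg_succ_le_of_im_le (hc : HasExpDecay c a C) {b : ℝ} {z : ℂ}
    (hz : z.im ≤ b) (k : ℕ) : ‖fourierTerm c (-(k + 1)) z‖ ≤ C * rexp (-(2 * π * (a - b) * (k + 1))) := by
  refine (norm_fourierTerm_le hc _ z).trans ?_
  rw [show |((-(k + 1) : ℤ) : ℝ)| = k + 1 by
    push_cast; rw [abs_neg]; exact abs_of_pos (by positivity)]
  have := hc.nonneg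
  gcongr C * rexp ?_
  push_cast
  nlinarith [mul_nonneg (mul_nonneg two_pi_pos.le (k.cast_add_one_pos (α := ℝ)).le)
    (sub_nonneg.2 hz)]

theorem summable_fourierTerm_neg_succ (hc : HasExpDecay c a C) {z : ℂ} (hz : z.im < a) : Summable fun k : ℕ => fourierTerm c (-(k + 1)) z :=
  summable_of_norm_le_exp_neg_mul_succ (mul_pos two_pi_pos (sub_pos.2 hz))
    (norm_fourierTerm_neg_succ_le_of_im_le hc le_rfl)

theorem norm_negPart_le_of_im_le (hc : HasExpDecay c a C)
    {b : ℝ} (hb : b < a) {z : ℂ} (hz : z.im ≤ b) :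
    ‖negPart c z‖ ≤ C / (rexp (2 * π * (a - b)) - 1) :=
  norm_tsum_le_of_norm_le_exp_neg_mul_succ (mul_pos two_pi_pos (sub_pos.2 hb))
    (norm_fourierTerm_neg_succ_le_of_im_le hc hz)

theorem hasSum_fourierTerm (hc : HasExpDecay c a C) {z : ℂ} (hz : |z.im| < a) :
    HasSum (fun m => fourierTerm c m z) (posPart c z + c 0 + negPart c z) := by
  obtain ⟨hlow, hhigh⟩ := abs_lt.1 hz
  have h := HasSum.of_add_one_of_neg_add_one (f := fun m => fourierTerm c m z)
    (summable_fourierTerm_succ hc hlow).hasSum (summable_fourierTerm_neg_succ hc hhigh).hasSum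
  rwa [fourierTerm_zero] at h

theorem differentiableOn_negPart (hc : HasExpDecay c a C) :
    DifferentiableOn ℂ (negPart c) {z | z.im < a} := by
  intro z (hz : z.im < a)
  set b := (z.im + a) / 2
  have hab : 0 < 2 * π * (a - b) := mul_pos two_pi_pos (by simp only [b]; linarith)
  have hU : IsOpen {w : ℂ | w.im < b} := isOpen_lt continuous_im continuous_const
  have hdiff : DifferentiableOn ℂ (negPart c) {w | w.im < b} :=
    Complex.differentiableOn_tsum_of_summable_norm
      ((hasSum_exp_neg_mul_succ hab).mul_left C).summable
      (fun k => (differentiable_fourierTerm c _).differentiableOn)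
      hU fun k w hw => norm_fourierTerm_neg_succ_le_of_im_le hc (le_of_lt hw) k
  exact (hdiff.differentiableAt (hU.mem_nhds (show z.im < b by simp only [b]; linarith)))
    |>.differentiableWithinAt

end Coefficients

theorem fourierTerm_add_mul_I (c : ℤ → ℂ) (k : ℕ) (z : ℂ) (ε : ℝ) :
    fourierTerm c (k + 1) (z + ε * I) =
      fourierTerm c (k + 1) z * (rexp (-(2 * π * ε)) : ℂ) ^ (k + 1) := by
  rw [fourierTerm_add, ofReal_exp, ← Complex.exp_nat_mul]
  congr 2
  push_cast
  linear_combination (2 * π * ((k : ℂ) + 1) * ε) * I_sq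

theorem norm_posPart_le_of_im_eq_neg {c : ℤ → ℂ} {a M : ℝ} (ha : 0 < a) (hM : 0 ≤ M)
    (hstrip : ∀ w : ℂ, |w.im| < a → ‖posPart c w‖ ≤ M) {z : ℂ} (hz : z.im = -a) :
    ‖posPart c z‖ ≤ M := by
  by_cases hs : Summable fun k : ℕ => fourierTerm c (k + 1) z
  swap
  · rwa [posPart, tsum_eq_zero_of_not_summable hs, norm_zero]
  -- Abel's theorem along `z + iε`, `ε ↓ 0`, where the series is a power series in `e^{-2πε}`
  have hr : Tendsto (fun ε : ℝ => rexp (-(2 * π * ε))) (𝓝[>] 0) (𝓝[<] 1) := by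
    refine tendsto_nhdsWithin_iff.2 ⟨?_, eventually_nhdsWithin_of_forall fun ε (hε : 0 < ε) =>
      Real.exp_lt_one_iff.2 (by nlinarith [pi_pos])⟩
    exact ((by fun_prop : Continuous fun ε : ℝ => rexp (-(2 * π * ε))).tendsto' 0 1
      (by simp)).mono_left nhdsWithin_le_nhds
  refine norm_tsum_le_of_abel hr hs ?_
  filter_upwards [Ioo_mem_nhdsGT (by linarith : (0 : ℝ) < 2 * a)] with ε hε
  rw [← tsum_congr fun k => fourierTerm_add_mul_I c k z ε]
  exact hstrip _ (abs_lt.2 ⟨by simp [hz]; linarith [hε.1], by simp [hz]; linarith [hε.2]⟩)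

section StripFunction

variable {v : ℂ → ℂ} {vk : ℤ → ℂ} {a C : ℝ}

theorem HasFourierCoeffOnLines.hasExpDecay (hcoeff : HasFourierCoeffOnLines v vk a)
    (ha : 0 ≤ a) (hbound : ∀ θ : ℂ, |θ.im| ≤ a → ‖v θ‖ ≤ C) : HasExpDecay vk a C := by
  intro m
  have hline : ∀ ρ : ℝ, |ρ| ≤ a → ‖vk m‖ ≤ C * rexp (2 * π * m * ρ) := fun ρ hρ =>
    hcoeff m ρ hρ ▸ norm_integral_line_le m fun t => hbound _ (by simpa using hρ)
  rcases le_or_gt 0 (m : ℝ) with hm | hm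
  · simpa [abs_of_nonneg hm, ← mul_assoc, mul_comm _ a] using
      hline (-a) (by simp [abs_of_nonneg ha])
  · simpa [abs_of_neg hm, ← mul_assoc, mul_comm _ a] using hline a (by simp [abs_of_nonneg ha])

theorem eq_posPart_add_coeff_zero_add_negPart (ha : 0 ≤ a) (hper : ∀ θ : ℂ, v (θ + 1) = v θ)
    (hcont : ContinuousOn v {θ : ℂ | |θ.im| ≤ a})
    (hbound : ∀ θ : ℂ, |θ.im| ≤ a → ‖v θ‖ ≤ C)
    (hcoeff : HasFourierCoeffOnLines v vk a)
    {z : ℂ} (hz : |z.im| < a) : v z = posPart vk z + vk 0 + negPart vk z := by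
  have hvk := hcoeff.hasExpDecay ha hbound
  set y := z.im
  let w : ℝ → ℂ := fun t => v (t + y * I)
  have hw : Continuous w :=
    hcont.comp_continuous (by fun_prop) fun t => by simpa using hz.le
  have hper' : Function.Periodic w 1 := fun t => by
    simp only [w, ← hper (t + y * I)]
    push_cast
    ring_nf
  have hb : ∀ m : ℤ, ∫ t in (0 : ℝ)..1, w t * cexp (-(2 * π * I * m * t)) =
      fourierTerm vk m (y * I) := by
    intro m
    rw [fourierTerm, hcoeff m y hz.le, ← intervalIntegral.integral_mul_const]
    refine intervalIntegral.integral_congr fun t _ => ?_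
    simp only [w, mul_assoc, ← Complex.exp_add]
    ring_nf
  have hs : Summable fun m => fourierTerm vk m (y * I) :=
    (hasSum_fourierTerm hvk (by simpa using hz)).summable
  have h := hasSum_mul_cexp_of_periodic hw hper' hb hs z.re
  simp only [← fourierTerm_add, w, add_comm _ (z.re : ℂ), y, re_add_im] at h
  exact h.unique (hasSum_fourierTerm hvk hz)

theorem norm_sub_coeff_zero_sub_negPart_le (ha : 0 ≤ a)
    (hbound : ∀ θ : ℂ, |θ.im| ≤ a → ‖v θ‖ ≤ C)
    (hcoeff : HasFourierCoeffOnLines v vk a)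
    {b : ℝ} (hb : b < a) {z : ℂ} (hz : |z.im| ≤ a) (hzb : z.im ≤ b) :
    ‖v z - vk 0 - negPart vk z‖ ≤ 2 * C + C / (rexp (2 * π * (a - b)) - 1) := by
  have hvk := hcoeff.hasExpDecay ha hbound
  calc ‖v z - vk 0 - negPart vk z‖ ≤ ‖v z‖ + ‖vk 0‖ + ‖negPart vk z‖ :=
        (norm_sub_le _ _).trans (add_le_add_left (norm_sub_le _ _) _)
    _ ≤ C + C + C / (rexp (2 * π * (a - b)) - 1) := by
      gcongr
      · exact hbound z hz
      · simpa using hvk 0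
      · exact norm_negPart_le_of_im_le hvk hb hzb
    _ = 2 * C + C / (rexp (2 * π * (a - b)) - 1) := by ring

theorem norm_posPart_le_of_abs_im_lt (ha : 0 < a) (hper : ∀ θ : ℂ, v (θ + 1) = v θ)
    (hcont : ContinuousOn v {θ : ℂ | |θ.im| ≤ a})
    (hdiff : DifferentiableOn ℂ v {θ : ℂ | |θ.im| < a})
    (hbound : ∀ θ : ℂ, |θ.im| ≤ a → ‖v θ‖ ≤ C)
    (hcoeff : HasFourierCoeffOnLines v vk a)
    {z : ℂ} (hz : |z.im| < a) :
    ‖posPart vk z‖ ≤ (2 + 1 / (rexp (2 * π * (2 * a)) - 1)) * C := by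
  have hvk := hcoeff.hasExpDecay ha.le hbound
  have hC := hvk.nonneg
  obtain ⟨hz₁, hz₂⟩ := abs_lt.1 hz
  set K := 2 + 1 / (rexp (2 * π * (2 * a)) - 1)
  obtain ⟨b, ⟨hzb, hba⟩, hbK⟩ : ∃ b, b ∈ Ioo z.im a ∧ 1 / (rexp (2 * π * (b + a)) - 1) < K := by
    have hE : rexp (2 * π * (a + a)) - 1 ≠ 0 :=
      (sub_pos.2 (Real.one_lt_exp_iff.2 (by nlinarith [pi_pos]))).ne'
    have hcont : ContinuousAt (fun b : ℝ => 1 / (rexp (2 * π * (b + a)) - 1)) a :=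
      continuousAt_const.div (by fun_prop) hE
    have hlt : 1 / (rexp (2 * π * (a + a)) - 1) < K := by
      rw [← two_mul]; linarith
    exact (Filter.Eventually.and (Ioo_mem_nhdsLT hz₂)
      ((hcont.eventually (gt_mem_nhds hlt)).filter_mono nhdsWithin_le_nhds)).exists
  have hab : -a < b := by linarith
  have hstrip : im ⁻¹' Ioo (-a) b ⊆ {θ : ℂ | |θ.im| < a} := fun w hw =>
    abs_lt.2 ⟨hw.1, hw.2.trans hba⟩
  have hclosure : closure (im ⁻¹' Ioo (-a) b) ⊆ {θ : ℂ | |θ.im| ≤ a} ∩ {θ : ℂ | θ.im < a} := by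
    rw [closure_preimage_im, closure_Ioo hab.ne]
    exact fun w hw => ⟨abs_le.2 ⟨hw.1, hw.2.trans hba.le⟩, hw.2.trans_lt hba⟩
  have hexp : ∀ w : ℂ, |w.im| < a → v w - vk 0 - negPart vk w = posPart vk w := fun w hw => by
    rw [eq_posPart_add_coeff_zero_add_negPart ha.le hper hcont hbound hcoeff hw]; ring
  rw [← hexp z hz]
  refine norm_le_of_bounded_of_horizontal_strip (f := fun w => v w - vk 0 - negPart vk w)
    (B := 2 * C + C / (rexp (2 * π * (a - b)) - 1)) hab ⟨?_, ?_⟩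
    (fun w hw => norm_sub_coeff_zero_sub_negPart_le ha.le hbound hcoeff hba (hstrip hw).le hw.2.le)
    ?_ ?_ hz₁.le hzb.le
  · exact ((hdiff.mono hstrip).sub_const _).sub ((differentiableOn_negPart hvk).mono
      fun w hw => hw.2.trans hba)
  · exact ((hcont.mono fun w hw => (hclosure hw).1).sub continuousOn_const).sub
      ((differentiableOn_negPart hvk).continuousOn.mono fun w hw => (hclosure hw).2)
  · intro w hw
    have hbot := norm_sub_coeff_zero_sub_negPart_le ha.le hbound hcoeff (b := -a) (by linarith)
      (by simp [hw, abs_of_pos ha]) hw.le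
    rw [show a - -a = 2 * a by ring] at hbot
    exact hbot.trans_eq (by ring)
  · intro w hw
    rw [hexp w (by rw [hw]; exact abs_lt.2 ⟨hab, hba⟩)]
    calc ‖posPart vk w‖ ≤ C / (rexp (2 * π * (w.im + a)) - 1) :=
          norm_posPart_le hvk (by rw [hw]; exact hab)
      _ = 1 / (rexp (2 * π * (b + a)) - 1) * C := by rw [hw]; ring
      _ ≤ K * C := by gcongr

theorem norm_posPart_le_of_abs_im_le (ha : 0 < a) (hper : ∀ θ : ℂ, v (θ + 1) = v θ)
    (hcont : ContinuousOn v {θ : ℂ | |θ.im| ≤ a})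
    (hdiff : DifferentiableOn ℂ v {θ : ℂ | |θ.im| < a})
    (hbound : ∀ θ : ℂ, |θ.im| ≤ a → ‖v θ‖ ≤ C) (hcoeff : HasFourierCoeffOnLines v vk a)
    {z : ℂ} (hz : |z.im| ≤ a) :
    ‖posPart vk z‖ ≤ (2 + 1 / (rexp (2 * π * (2 * a)) - 1)) * C := by
  have hvk := hcoeff.hasExpDecay ha.le hbound
  have hC := hvk.nonneg
  have hE : 0 < rexp (2 * π * (2 * a)) - 1 := sub_pos.2 (Real.one_lt_exp_iff.2 (by positivity))
  have hstrip := fun w => norm_posPart_le_of_abs_im_lt (z := w) ha hper hcont hdiff hbound hcoeff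
  obtain ⟨hz₁, hz₂⟩ := abs_le.1 hz
  rcases hz₁.eq_or_lt with hbot | hbot
  · exact norm_posPart_le_of_im_eq_neg ha
      (mul_nonneg (add_nonneg zero_le_two (one_div_nonneg.2 hE.le)) hC) hstrip hbot.symm
  rcases hz₂.lt_or_eq with htop | htop
  · exact hstrip z (abs_lt.2 ⟨hbot, htop⟩)
  calc ‖posPart vk z‖ ≤ C / (rexp (2 * π * (z.im + a)) - 1) := norm_posPart_le hvk hbot
    _ = 1 / (rexp (2 * π * (2 * a)) - 1) * C := by rw [htop]; ring_nf
    _ ≤ (2 + 1 / (rexp (2 * π * (2 * a)) - 1)) * C := by gcongr; linarith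

end StripFunction

end StripFourier

open Real in
/-- The projection `Π⁺ : Σ_{k∈ℤ} v_k e^{2πikθ} ↦ Σ_{k≥1} v_k e^{2πikθ}` is bounded on the
space of 1-periodic functions continuous on the closed strip `|Im θ| ≤ R/2`, holomorphic
inside, with sup norm: `sup|Π⁺v| ≤ (2 + 1/(e^{2πR} − 1)) · sup|v|`. -/
theorem positive_projection_bound (R C : ℝ) (hR : 0 < R) (v : ℂ → ℂ) (vk : ℤ → ℂ)
    (hper : ∀ θ : ℂ, v (θ + 1) = v θ)
    (hcont : ContinuousOn v {θ : ℂ | |θ.im| ≤ R / 2})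
    (hdiff : DifferentiableOn ℂ v {θ : ℂ | |θ.im| < R / 2})
    (hbound : ∀ θ : ℂ, |θ.im| ≤ R / 2 → ‖v θ‖ ≤ C)
    (hcoeff : ∀ (k : ℤ) (ρ : ℝ), |ρ| ≤ R / 2 →
      vk k = ∫ t in (0 : ℝ)..1,
        v ((t : ℂ) + (ρ : ℂ) * Complex.I) *
          Complex.exp (-(2 * (π : ℂ) * Complex.I * (k : ℂ)) * ((t : ℂ) + (ρ : ℂ) * Complex.I))) :
    ∀ θ : ℂ, |θ.im| ≤ R / 2 →
      ‖∑' k : ℕ, vk (k + 1) * Complex.exp (2 * (π : ℂ) * Complex.I * ((k : ℂ) + 1) * θ)‖ ≤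
        (2 + 1 / (Real.exp (2 * π * R) - 1)) * C := by
  intro θ hθ
  have hposPart : ∑' k : ℕ, vk (k + 1) * Complex.exp (2 * (π : ℂ) * Complex.I * ((k : ℂ) + 1) * θ)
      = StripFourier.posPart vk θ := tsum_congr fun k => by simp [StripFourier.fourierTerm]
  rw [hposPart, ← mul_div_cancel₀ R (two_ne_zero' ℝ)]
  exact StripFourier.norm_posPart_le_of_abs_im_le (half_pos hR) hper hcont hdiff hbound hcoeff hθ
end

section
/- Let α be an irrational number whose partial quotients satisfy a_1(α) = a_2(α) = ⋯ = a_k(α) = 1, and suppose α ∈ DC_{γ,τ}, i.e. |α − n/m| ≥ γ/m^{2+τ} for all rationals. Then the Bruno-type sum B(α) = Σ_{ℓ≥0} log a_{ℓ+1}(α)/m_ℓ(α) satisfies B(α) < Σ_{ℓ≥k} ( log(γ^{−1}) φ^{ℓ−1} + 2τ φ^{(ℓ−1)/2} ), where φ = (√5−1)/2; in particular B(α) is finite. -/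
/-!
Write `x_ℓ` for the Gauss-map iterates and `p_ℓ = x_0 ⋯ x_ℓ`. Then `m_ℓ α - n_ℓ = (-1)^ℓ p_ℓ` and
`m_{ℓ+1} p_ℓ + m_ℓ p_{ℓ+1} = 1`, so `a_{ℓ+1} m_ℓ p_ℓ ≤ m_{ℓ+1} p_ℓ < 1`, while the Diophantine
condition gives `p_ℓ ≥ γ / m_ℓ^{1+τ}`; together, `a_{ℓ+1} < m_ℓ^τ / γ`. Taking logarithms and
using `1 / m_ℓ ≤ φ⁻¹^{ℓ-1}` (the `m_ℓ` grow at least like Fibonacci numbers) and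
`log m / m ≤ 2 / √m` bounds every term of `B(α)` strictly by the corresponding term of the
right-hand side, and the terms with `ℓ < k` vanish because `a_{ℓ+1} = 1`.
Here `φ` is Mathlib's golden ratio `(1 + √5) / 2`, so the paper's `(√5 - 1) / 2` is `φ⁻¹`.
-/

open Real Finset
open scoped goldenRatio

/-- The Diophantine class `DC_{γ,τ}`. -/
def IsDiophantine (γ τ α : ℝ) : Prop :=
  ∀ (n : ℤ) (m : ℕ), 1 ≤ m → γ / (m : ℝ) ^ (2 + τ) ≤ |α - (n : ℝ) / (m : ℝ)|

theorem Irrational.fract {x : ℝ} (h : Irrational x) : Irrational (Int.fract x) := by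
  simpa only [Int.self_sub_floor] using h.sub_intCast ⌊x⌋

theorem goldenRatio_pow_le_goldenRatio_mul {u : ℕ → ℝ} (h₀ : 1 ≤ u 0) (h₁ : 1 ≤ u 1)
    (h : ∀ n, u (n + 1) + u n ≤ u (n + 2)) : ∀ n, φ ^ n ≤ φ * u n
  | 0 => by nlinarith [one_lt_goldenRatio]
  | 1 => by nlinarith [goldenRatio_pos]
  | n + 2 => calc
      φ ^ (n + 2) = φ ^ (n + 1) + φ ^ n := by
        linarith [goldenRatio_pow_sub_goldenRatio_pow n]
      _ ≤ φ * u (n + 1) + φ * u n := add_le_add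
        (goldenRatio_pow_le_goldenRatio_mul h₀ h₁ h (n + 1))
        (goldenRatio_pow_le_goldenRatio_mul h₀ h₁ h n)
      _ ≤ φ * u (n + 2) := by rw [← mul_add]; gcongr; exact h n

theorem log_div_le_two_div_sqrt {x : ℝ} (hx : 0 ≤ x) : log x / x ≤ 2 / √x := calc
  log x / x ≤ x ^ (1 / 2 : ℝ) / (1 / 2) / x := by
    gcongr; exact log_le_rpow_div hx one_half_pos
  _ = 2 * (√x / x) := by rw [← sqrt_eq_rpow]; ring
  _ = 2 / √x := by rw [sqrt_div_self', mul_one_div]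

theorem summable_rpow_sub_div {r : ℝ} (hr₀ : 0 < r) (hr₁ : r < 1) (b : ℝ) {c : ℝ}
    (hc : 0 < c) : Summable fun n : ℕ => r ^ (((n : ℝ) - b) / c) := by
  refine ((summable_geometric_of_lt_one (rpow_nonneg hr₀.le _)
    (rpow_lt_one hr₀.le hr₁ (one_div_pos.mpr hc))).mul_left (r ^ (-b / c))).congr fun n => ?_
  rw [← rpow_natCast, ← rpow_mul hr₀.le, ← rpow_add hr₀]
  ring_nf

theorem summable_and_tsum_lt_tsum_nat_add {f g : ℕ → ℝ} (k : ℕ) (hf₀ : ∀ n, 0 ≤ f n)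
    (hfg : ∀ n, f n < g n) (hg : Summable g) (hf_zero : ∀ n < k, f n = 0) :
    Summable f ∧ ∑' n, f n < ∑' j, g (k + j) := by
  have hf : Summable f := hg.of_nonneg_of_le hf₀ fun n => (hfg n).le
  refine ⟨hf, ?_⟩
  have hshift : ∑' n, f n = ∑' j, f (j + k) := by
    rw [← hf.sum_add_tsum_nat_add k, Finset.sum_eq_zero fun n hn => hf_zero n
      (Finset.mem_range.mp hn), zero_add]
  rw [hshift]
  refine Summable.tsum_lt_tsum (i := 0) (fun j => ?_) ?_ ((summable_nat_add_iff k).mpr hf)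
    ((summable_nat_add_iff k).mpr hg |>.congr fun j => by rw [add_comm])
  · rw [add_comm k]; exact (hfg _).le
  · simpa using hfg k

variable {α : ℝ}

theorem irrational_cfXi_s18 (hα : Irrational α) : ∀ ℓ, Irrational (cfXi α ℓ)
  | 0 => hα.fract
  | ℓ + 1 => (irrational_cfXi_s18 hα ℓ).inv.fract

theorem cfXi_pos_s18 (hα : Irrational α) (ℓ : ℕ) : 0 < cfXi α ℓ := by
  refine lt_of_le_of_ne ?_ (irrational_cfXi_s18 hα ℓ).ne_zero.symm
  cases ℓ <;> exact Int.fract_nonneg _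

theorem cfXi_lt_one_s18 (ℓ : ℕ) : cfXi α ℓ < 1 := by
  cases ℓ <;> exact Int.fract_lt_one _

theorem cfXi_zero : cfXi α 0 = α - cfA α 0 := rfl

theorem cfXi_succ (ℓ : ℕ) : cfXi α (ℓ + 1) = (cfXi α ℓ)⁻¹ - cfA α (ℓ + 1) := rfl

theorem cfXi_mul_cfA_add_cfXi (hα : Irrational α) (ℓ : ℕ) :
    cfXi α ℓ * (cfA α (ℓ + 1) + cfXi α (ℓ + 1)) = 1 := by
  rw [cfXi_succ, add_sub_cancel, mul_inv_cancel₀ (cfXi_pos_s18 hα ℓ).ne']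

theorem one_le_cfA (hα : Irrational α) (ℓ : ℕ) : 1 ≤ cfA α (ℓ + 1) :=
  Int.le_floor.mpr <| by
    exact_mod_cast ((one_lt_inv₀ (cfXi_pos_s18 hα ℓ)).mpr (cfXi_lt_one_s18 ℓ)).le

theorem cfM_add_two (ℓ : ℕ) : cfM α (ℓ + 2) = cfA α (ℓ + 2) * cfM α (ℓ + 1) + cfM α ℓ := rfl

theorem cfN_add_two (ℓ : ℕ) : cfN α (ℓ + 2) = cfA α (ℓ + 2) * cfN α (ℓ + 1) + cfN α ℓ := rfl

theorem one_le_cfM_s18 (hα : Irrational α) : ∀ ℓ, 1 ≤ cfM α ℓ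
  | 0 => le_rfl
  | 1 => one_le_cfA hα 0
  | ℓ + 2 => by
    rw [cfM_add_two]
    nlinarith [one_le_cfA hα (ℓ + 1), one_le_cfM_s18 hα (ℓ + 1), one_le_cfM_s18 hα ℓ]

theorem cfA_mul_cfM_le (hα : Irrational α) : ∀ ℓ, cfA α (ℓ + 1) * cfM α ℓ ≤ cfM α (ℓ + 1)
  | 0 => (mul_one _).le
  | ℓ + 1 => by rw [cfM_add_two]; linarith [one_le_cfM_s18 hα ℓ]

theorem cfM_add_cfM_le (hα : Irrational α) (ℓ : ℕ) : cfM α (ℓ + 1) + cfM α ℓ ≤ cfM α (ℓ + 2) := by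
  rw [cfM_add_two]; nlinarith [one_le_cfA hα (ℓ + 1), one_le_cfM_s18 hα (ℓ + 1)]

theorem inv_cfM_le (hα : Irrational α) (ℓ : ℕ) : (cfM α ℓ : ℝ)⁻¹ ≤ φ⁻¹ ^ ((ℓ : ℝ) - 1) := by
  have hm : (0 : ℝ) < cfM α ℓ := by exact_mod_cast one_le_cfM_s18 hα ℓ
  have hgrowth := goldenRatio_pow_le_goldenRatio_mul (u := fun n => (cfM α n : ℝ))
    (by exact_mod_cast one_le_cfM_s18 hα 0) (by exact_mod_cast one_le_cfM_s18 hα 1)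
    (fun n => by exact_mod_cast cfM_add_cfM_le hα n) ℓ
  rw [inv_rpow goldenRatio_pos.le, rpow_sub_one goldenRatio_ne_zero, rpow_natCast, inv_div,
    inv_le_comm₀ hm (by positivity), inv_div, div_le_iff₀ goldenRatio_pos]
  linarith

theorem inv_sqrt_cfM_le (hα : Irrational α) (ℓ : ℕ) :
    (√(cfM α ℓ : ℝ))⁻¹ ≤ φ⁻¹ ^ (((ℓ : ℝ) - 1) / 2) := by
  rw [← sqrt_inv, div_eq_mul_one_div, rpow_mul (by positivity), ← sqrt_eq_rpow]
  exact sqrt_le_sqrt (inv_cfM_le hα ℓ)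

/-- `p_ℓ = x_0 ⋯ x_ℓ = |m_ℓ α - n_ℓ|`. -/
noncomputable def cfXiProd (α : ℝ) (ℓ : ℕ) : ℝ := ∏ i ∈ range (ℓ + 1), cfXi α i

theorem cfXiProd_zero : cfXiProd α 0 = cfXi α 0 := by simp [cfXiProd]

theorem cfXiProd_succ (ℓ : ℕ) : cfXiProd α (ℓ + 1) = cfXiProd α ℓ * cfXi α (ℓ + 1) :=
  prod_range_succ _ _

theorem cfXiProd_pos (hα : Irrational α) (ℓ : ℕ) : 0 < cfXiProd α ℓ :=
  prod_pos fun i _ => cfXi_pos_s18 hα i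

theorem cfM_mul_sub_cfN (hα : Irrational α) :
    ∀ ℓ, (cfM α ℓ : ℝ) * α - cfN α ℓ = (-1) ^ ℓ * cfXiProd α ℓ
  | 0 => by simp [cfM, cfN, cfXiProd_zero, cfXi_zero]
  | 1 => by
    simp only [cfM, cfN, cfXiProd_succ, cfXiProd_zero]
    push_cast
    linear_combination cfXi_mul_cfA_add_cfXi hα 0 - (cfA α 1 : ℝ) * cfXi_zero (α := α)
  | ℓ + 2 => by
    have hrec : (cfM α (ℓ + 2) : ℝ) * α - cfN α (ℓ + 2) =
        cfA α (ℓ + 2) * ((cfM α (ℓ + 1) : ℝ) * α - cfN α (ℓ + 1)) + (cfM α ℓ * α - cfN α ℓ) := by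
      rw [cfM_add_two, cfN_add_two]; push_cast; ring
    rw [hrec, cfM_mul_sub_cfN hα (ℓ + 1), cfM_mul_sub_cfN hα ℓ]
    simp only [cfXiProd_succ]
    linear_combination (-(-1 : ℝ) ^ ℓ * cfXiProd α ℓ) * cfXi_mul_cfA_add_cfXi hα (ℓ + 1)

theorem cfM_succ_mul_cfXiProd_add (hα : Irrational α) :
    ∀ ℓ, (cfM α (ℓ + 1) : ℝ) * cfXiProd α ℓ + cfM α ℓ * cfXiProd α (ℓ + 1) = 1
  | 0 => by
    simp only [cfM, cfXiProd_succ, cfXiProd_zero]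
    push_cast
    linear_combination cfXi_mul_cfA_add_cfXi hα 0
  | ℓ + 1 => by
    have ih := cfM_succ_mul_cfXiProd_add hα ℓ
    rw [cfXiProd_succ] at ih
    rw [cfM_add_two]
    simp only [cfXiProd_succ]
    push_cast
    linear_combination ih + ((cfM α (ℓ + 1) : ℝ) * cfXiProd α ℓ) * cfXi_mul_cfA_add_cfXi hα (ℓ + 1)

theorem cfA_mul_cfM_mul_cfXiProd_lt_one (hα : Irrational α) (ℓ : ℕ) :
    (cfA α (ℓ + 1) : ℝ) * cfM α ℓ * cfXiProd α ℓ < 1 := by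
  have hle : (cfA α (ℓ + 1) : ℝ) * cfM α ℓ ≤ cfM α (ℓ + 1) := by
    exact_mod_cast cfA_mul_cfM_le hα ℓ
  have hm : (0 : ℝ) < cfM α ℓ := by exact_mod_cast one_le_cfM_s18 hα ℓ
  have := cfM_succ_mul_cfXiProd_add hα ℓ
  nlinarith [cfXiProd_pos hα ℓ, cfXiProd_pos hα (ℓ + 1)]

theorem abs_sub_cfN_div_cfM (hα : Irrational α) (ℓ : ℕ) :
    |α - cfN α ℓ / cfM α ℓ| = cfXiProd α ℓ / cfM α ℓ := by
  have hm : (0 : ℝ) < cfM α ℓ := by exact_mod_cast one_le_cfM_s18 hα ℓ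
  rw [sub_div' hm.ne', mul_comm, cfM_mul_sub_cfN hα, abs_div, abs_mul, abs_pow, abs_neg,
    abs_one, one_pow, one_mul, abs_of_pos (cfXiProd_pos hα ℓ), abs_of_pos hm]

namespace IsDiophantine

variable {γ τ : ℝ}

theorem lt_one (h : IsDiophantine γ τ α) : γ < 1 := by
  have h₁ := h ⌊α⌋ 1 le_rfl
  rw [Nat.cast_one, one_rpow, div_one, div_one, Int.self_sub_floor,
    abs_of_nonneg (Int.fract_nonneg α)] at h₁
  exact h₁.trans_lt (Int.fract_lt_one α)

theorem cfA_lt_rpow_div (h : IsDiophantine γ τ α) (hα : Irrational α) (hγ : 0 < γ) (ℓ : ℕ) :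
    (cfA α (ℓ + 1) : ℝ) < (cfM α ℓ : ℝ) ^ τ / γ := by
  obtain ⟨M, hM⟩ := Int.eq_ofNat_of_zero_le (zero_le_one.trans (one_le_cfM_s18 hα ℓ))
  have hm : (0 : ℝ) < cfM α ℓ := by exact_mod_cast one_le_cfM_s18 hα ℓ
  set m : ℝ := (cfM α ℓ : ℝ) with hm_def
  have hdc := h (cfN α ℓ) M (by have := one_le_cfM_s18 hα ℓ; omega)
  have hMm : (M : ℝ) = m := by rw [hm_def, hM]; rfl
  rw [hMm, abs_sub_cfN_div_cfM hα, add_comm, rpow_add hm, rpow_two,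
    div_le_div_iff₀ (by positivity) hm] at hdc
  have hγ_le : γ ≤ m * cfXiProd α ℓ * m ^ τ :=
    le_of_mul_le_mul_right (by linarith) hm
  rw [lt_div_iff₀ hγ]
  calc (cfA α (ℓ + 1) : ℝ) * γ ≤ cfA α (ℓ + 1) * (m * cfXiProd α ℓ * m ^ τ) := by
        gcongr; exact_mod_cast zero_le_one.trans (one_le_cfA hα ℓ)
    _ = (cfA α (ℓ + 1) * m * cfXiProd α ℓ) * m ^ τ := by ring
    _ < 1 * m ^ τ := by gcongr; exact cfA_mul_cfM_mul_cfXiProd_lt_one hα ℓ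
    _ = m ^ τ := one_mul _

theorem log_cfA_div_cfM_lt (h : IsDiophantine γ τ α) (hα : Irrational α) (hγ : 0 < γ)
    (hτ : 0 ≤ τ) (ℓ : ℕ) :
    log (cfA α (ℓ + 1)) / cfM α ℓ < log γ⁻¹ * φ⁻¹ ^ ((ℓ : ℝ) - 1)
      + 2 * τ * φ⁻¹ ^ (((ℓ : ℝ) - 1) / 2) := by
  have hm : (0 : ℝ) < cfM α ℓ := by exact_mod_cast one_le_cfM_s18 hα ℓ
  set m : ℝ := (cfM α ℓ : ℝ)
  have ha : (0 : ℝ) < cfA α (ℓ + 1) := by exact_mod_cast one_le_cfA hα ℓ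
  have hlog : log (cfA α (ℓ + 1)) < log γ⁻¹ + τ * log m := by
    have := log_lt_log ha (h.cfA_lt_rpow_div hα hγ ℓ)
    rw [log_div (by positivity) hγ.ne', log_rpow hm] at this
    rw [log_inv]
    linarith
  have hγ_log : 0 ≤ log γ⁻¹ := log_nonneg ((one_le_inv₀ hγ).mpr h.lt_one.le)
  calc log (cfA α (ℓ + 1)) / m < (log γ⁻¹ + τ * log m) / m := by gcongr
    _ = log γ⁻¹ * m⁻¹ + τ * (log m / m) := by ring
    _ ≤ log γ⁻¹ * φ⁻¹ ^ ((ℓ : ℝ) - 1) + τ * (2 * (√m)⁻¹) := by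
      gcongr
      · exact inv_cfM_le hα ℓ
      · rw [← div_eq_mul_inv]; exact log_div_le_two_div_sqrt hm.le
    _ ≤ log γ⁻¹ * φ⁻¹ ^ ((ℓ : ℝ) - 1) + 2 * τ * φ⁻¹ ^ (((ℓ : ℝ) - 1) / 2) := by
      rw [← mul_assoc, mul_comm τ]
      gcongr
      exact inv_sqrt_cfM_le hα ℓ

end IsDiophantine

theorem sqrt_five_sub_one_div_two : (√5 - 1) / 2 = φ⁻¹ := by
  rw [inv_goldenRatio, goldenConj]; ring

open Real in
theorem bruno_sum_bound_general (α : ℝ) (hα : Irrational α) (γ τ : ℝ) (hγ : 0 < γ) (hτ : 0 ≤ τ)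
    (k : ℕ)
    (hones : ∀ ℓ : ℕ, 1 ≤ ℓ → ℓ ≤ k → cfA α ℓ = 1)
    (hDC : ∀ (n : ℤ) (m : ℕ), 1 ≤ m → γ / (m : ℝ) ^ (2 + τ) ≤ |α - (n : ℝ) / (m : ℝ)|) :
    Summable (fun ℓ : ℕ => Real.log (cfA α (ℓ + 1) : ℝ) / (cfM α ℓ : ℝ)) ∧
    (∑' ℓ : ℕ, Real.log (cfA α (ℓ + 1) : ℝ) / (cfM α ℓ : ℝ)) <
      ∑' j : ℕ, (Real.log γ⁻¹ * ((Real.sqrt 5 - 1) / 2) ^ (((k + j : ℕ) : ℝ) - 1)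
        + 2 * τ * ((Real.sqrt 5 - 1) / 2) ^ ((((k + j : ℕ) : ℝ) - 1) / 2)) := by
  have hφ₀ : 0 < φ⁻¹ := inv_pos.mpr goldenRatio_pos
  have hφ₁ : φ⁻¹ < 1 := inv_lt_one_of_one_lt₀ one_lt_goldenRatio
  have hbound : Summable fun ℓ : ℕ => log γ⁻¹ * φ⁻¹ ^ ((ℓ : ℝ) - 1)
      + 2 * τ * φ⁻¹ ^ (((ℓ : ℝ) - 1) / 2) := by
    have h₁ := (summable_rpow_sub_div hφ₀ hφ₁ 1 one_pos).mul_left (log γ⁻¹)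
    simp only [div_one] at h₁
    exact h₁.add ((summable_rpow_sub_div hφ₀ hφ₁ 1 two_pos).mul_left (2 * τ))
  rw [sqrt_five_sub_one_div_two]
  refine summable_and_tsum_lt_tsum_nat_add k
    (fun ℓ => div_nonneg (log_nonneg (by exact_mod_cast one_le_cfA hα ℓ))
      (by exact_mod_cast zero_le_one.trans (one_le_cfM_s18 hα ℓ)))
    (IsDiophantine.log_cfA_div_cfM_lt hDC hα hγ hτ) hbound fun ℓ hℓ => ?_
  rw [hones (ℓ + 1) (by omega) (by omega), Int.cast_one, log_one, zero_div]

open Real in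
/-- If the partial quotients of an irrational `α` satisfy `a_1 = ⋯ = a_k = 1` and `α` is
`(γ,τ)`-Diophantine, then the Bruno-type sum `B(α) = Σ_{ℓ≥0} log a_{ℓ+1}(α)/m_ℓ(α)` converges
and is bounded by `Σ_{ℓ≥k} ( log(γ⁻¹) φ^{ℓ−1} + 2τ φ^{(ℓ−1)/2} )`, with `φ = (√5−1)/2`. -/
theorem bruno_sum_bound (α : ℝ) (hα : Irrational α) (γ τ : ℝ) (hγ : 0 < γ) (hτ : 0 ≤ τ)
    (k : ℕ) (hk : 1 ≤ k)
    (hones : ∀ ℓ : ℕ, 1 ≤ ℓ → ℓ ≤ k → cfA α ℓ = 1)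
    (hDC : ∀ (n : ℤ) (m : ℕ), 1 ≤ m → γ / (m : ℝ) ^ (2 + τ) ≤ |α - (n : ℝ) / (m : ℝ)|) :
    Summable (fun ℓ : ℕ => Real.log (cfA α (ℓ + 1) : ℝ) / (cfM α ℓ : ℝ)) ∧
    (∑' ℓ : ℕ, Real.log (cfA α (ℓ + 1) : ℝ) / (cfM α ℓ : ℝ)) <
      ∑' j : ℕ, (Real.log γ⁻¹ * ((Real.sqrt 5 - 1) / 2) ^ (((k + j : ℕ) : ℝ) - 1)
        + 2 * τ * ((Real.sqrt 5 - 1) / 2) ^ ((((k + j : ℕ) : ℝ) - 1) / 2)) :=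
  bruno_sum_bound_general α hα γ τ hγ hτ k hones hDC
end
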